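/- Let μ be a probability measure on 𝕋² of finite logarithmic energy, and let C[μ](z1,z2) = ∫_{𝕋²} (1−e^{iθ1}z1)^{−1}(1−e^{iθ2}z2)^{−1} dμ. Then C[μ] belongs to the Bergman space A²(𝔻²)=𝔇_{−1}, with ‖C[μ]‖²_{𝔇_{−1}} = Σ_{k,l≥0} |μ̂(k,l)|²/((k+1)(l+1)), which is bounded by a constant times the energy I[μ]. -/

import Mathlib

open scoped ENNReal NNReal Classical
open Filter

/-- Weight `(k+1)^α` as an extended nonnegative real. -/
noncomputable def wt (α : ℝ) (k : ℕ) : ℝ≥0∞ := ((k : ℝ≥0∞) + 1) ^ α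

/-- Squared norm of the Dirichlet-type space `𝔇_α` of the bidisk, at the level of
Taylor coefficients `a k l`. -/
noncomputable def Dnorm2 (α : ℝ) (a : ℕ → ℕ → ℂ) : ℝ≥0∞ :=
  ∑' p : ℕ × ℕ, wt α p.1 * wt α p.2 * ((‖a p.1 p.2‖₊ : ℝ≥0∞)) ^ 2

/-- Squared norm of the one-variable Dirichlet-type space `D_α`. -/
noncomputable def dnorm2 (α : ℝ) (a : ℕ → ℂ) : ℝ≥0∞ :=
  ∑' k : ℕ, wt α k * ((‖a k‖₊ : ℝ≥0∞)) ^ 2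

/-- Cauchy product (coefficients of the product of two power series in two variables). -/
noncomputable def conv2 (p a : ℕ → ℕ → ℂ) : ℕ → ℕ → ℂ := fun k l =>
  ∑ i ∈ Finset.range (k + 1), ∑ j ∈ Finset.range (l + 1), p i j * a (k - i) (l - j)

/-- Cauchy product in one variable. -/
noncomputable def conv1 (p a : ℕ → ℂ) : ℕ → ℂ := fun k =>
  ∑ i ∈ Finset.range (k + 1), p i * a (k - i)

/-- Coefficients of the constant function `1` in two variables. -/
def one2 : ℕ → ℕ → ℂ := fun k l => if k = 0 ∧ l = 0 then 1 else 0

/-- Coefficients of the constant function `1` in one variable. -/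
def one1 : ℕ → ℂ := fun k => if k = 0 then 1 else 0

/-- `p` is (the coefficient sequence of) a polynomial in `𝔓_n`. -/
def IsPoly2 (n : ℕ) (p : ℕ → ℕ → ℂ) : Prop := ∀ k l, n < k ∨ n < l → p k l = 0

/-- `p` is a one-variable polynomial of degree at most `n`. -/
def IsPoly1 (n : ℕ) (p : ℕ → ℂ) : Prop := ∀ k, n < k → p k = 0

/-- Cyclicity of `a` in `𝔇_α`: some sequence of polynomials `p n` has `‖p n · f - 1‖_α → 0`. -/
def Cyclic2 (α : ℝ) (a : ℕ → ℕ → ℂ) : Prop :=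
  ∃ p : ℕ → ℕ → ℕ → ℂ, (∀ n, ∃ m, IsPoly2 m (p n)) ∧
    Tendsto (fun n => Dnorm2 α (fun k l => conv2 (p n) a k l - one2 k l)) atTop (nhds 0)

/-- Cyclicity of `a` in the one-variable space `D_α`. -/
def Cyclic1 (α : ℝ) (a : ℕ → ℂ) : Prop :=
  ∃ p : ℕ → ℕ → ℂ, (∀ n, ∃ m, IsPoly1 m (p n)) ∧
    Tendsto (fun n => dnorm2 α (fun k => conv1 (p n) a k - one1 k)) atTop (nhds 0)

/-- Squared distance `dist²_{𝔇_α}(1, f · 𝔓_n)`. -/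
noncomputable def distP2 (α : ℝ) (n : ℕ) (a : ℕ → ℕ → ℂ) : ℝ≥0∞ :=
  ⨅ (p : ℕ → ℕ → ℂ) (_ : IsPoly2 n p), Dnorm2 α (fun k l => conv2 p a k l - one2 k l)

/-- Fourier coefficient `μ̂(k,l)` of a measure on `ℝ × ℝ` (angles on the torus `𝕋²`). -/
noncomputable def muhat (μ : MeasureTheory.Measure (ℝ × ℝ)) (k l : ℤ) : ℂ :=
  ∫ θ, Complex.exp (-Complex.I * ((k : ℂ) * (θ.1 : ℂ) + (l : ℂ) * (θ.2 : ℂ))) ∂μ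

/-- Logarithmic energy of a measure on `𝕋²`, in its Fourier representation. -/
noncomputable def energy (μ : MeasureTheory.Measure (ℝ × ℝ)) : ℝ≥0∞ :=
  1 + (∑' k : ℕ, ((‖muhat μ ((k : ℤ) + 1) 0‖₊ : ℝ≥0∞)) ^ 2 / ((k : ℝ≥0∞) + 1))
    + (∑' l : ℕ, ((‖muhat μ 0 ((l : ℤ) + 1)‖₊ : ℝ≥0∞)) ^ 2 / ((l : ℝ≥0∞) + 1))
    + (1 / 2) * ∑' q : {k : ℤ // k ≠ 0} × ℕ,
        ((‖muhat μ q.1.1 ((q.2 : ℤ) + 1)‖₊ : ℝ≥0∞)) ^ 2 /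
          ((q.1.1.natAbs : ℝ≥0∞) * ((q.2 : ℝ≥0∞) + 1))

/-- Squared Bergman `A²(𝔻²) = 𝔇_{-1}` norm of the Cauchy transform `C[μ]`, whose Taylor
coefficient at `z₁^k z₂^l` is `μ̂(-k,-l)`. -/
noncomputable def bergNorm (μ : MeasureTheory.Measure (ℝ × ℝ)) : ℝ≥0∞ :=
  ∑' p : ℕ × ℕ, ((‖muhat μ (-(p.1 : ℤ)) (-(p.2 : ℤ))‖₊ : ℝ≥0∞)) ^ 2 /
    (((p.1 : ℝ≥0∞) + 1) * ((p.2 : ℝ≥0∞) + 1))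

/-- The Cauchy transform `C[μ](z₁,z₂)`. -/
noncomputable def cauchy (μ : MeasureTheory.Measure (ℝ × ℝ)) (z1 z2 : ℂ) : ℂ :=
  ∫ θ, ((1 - Complex.exp (Complex.I * (θ.1 : ℂ)) * z1)⁻¹ *
        (1 - Complex.exp (Complex.I * (θ.2 : ℂ)) * z2)⁻¹) ∂μ

/-! Expanding both Cauchy kernels in geometric series, `C[μ]` is the double power series with
coefficients `μ̂(-k,-l)`; termwise integration is justified because `|e^{iθ}| = 1`, so the series
is dominated by `Σ |z₁|^k |z₂|^l`. Since `|μ̂(-k,-l)| = |μ̂(k,l)|`, each Bergman weight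
`1/((k+1)(l+1))` is dominated by the corresponding energy weight (for `k, l ≥ 1` by `1/(kl)`,
which is twice the energy weight, whence the constant `2`). -/

open MeasureTheory Complex

lemma inv_one_sub_mul_inv_one_sub_eq_tsum {𝕜 : Type*} [NormedField 𝕜] [CompleteSpace 𝕜]
    {a b : 𝕜} (ha : ‖a‖ < 1) (hb : ‖b‖ < 1) :
    (1 - a)⁻¹ * (1 - b)⁻¹ = ∑' p : ℕ × ℕ, a ^ p.1 * b ^ p.2 := by
  rw [← tsum_geometric_of_norm_lt_one ha, ← tsum_geometric_of_norm_lt_one hb,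
    tsum_mul_tsum_of_summable_norm (summable_norm_geometric_of_norm_lt_one ha)
      (summable_norm_geometric_of_norm_lt_one hb)]

lemma norm_exp_I_mul_ofReal_mul (x : ℝ) (z : ℂ) : ‖exp (I * x) * z‖ = ‖z‖ := by
  rw [norm_mul, norm_exp_I_mul_ofReal, one_mul]

lemma exp_mul_pow_mul_exp_mul_pow (θ : ℝ × ℝ) (z₁ z₂ : ℂ) (k l : ℕ) :
    (exp (I * θ.1) * z₁) ^ k * (exp (I * θ.2) * z₂) ^ l =
      exp (-I * (((-k : ℤ) : ℂ) * θ.1 + ((-l : ℤ) : ℂ) * θ.2)) * (z₁ ^ k * z₂ ^ l) := by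
  rw [mul_pow, mul_pow, mul_mul_mul_comm, ← exp_nat_mul, ← exp_nat_mul, ← exp_add]
  push_cast
  ring_nf

lemma integral_exp_mul_pow_mul_exp_mul_pow (μ : Measure (ℝ × ℝ)) (z₁ z₂ : ℂ) (k l : ℕ) :
    ∫ θ, (exp (I * θ.1) * z₁) ^ k * (exp (I * θ.2) * z₂) ^ l ∂μ =
      muhat μ (-k) (-l) * z₁ ^ k * z₂ ^ l := by
  simp_rw [exp_mul_pow_mul_exp_mul_pow, integral_mul_const, muhat, mul_assoc]

theorem cauchy_eq_tsum (μ : Measure (ℝ × ℝ)) [IsFiniteMeasure μ] {z₁ z₂ : ℂ}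
    (h₁ : ‖z₁‖ < 1) (h₂ : ‖z₂‖ < 1) :
    cauchy μ z₁ z₂ = ∑' p : ℕ × ℕ, muhat μ (-(p.1 : ℤ)) (-(p.2 : ℤ)) * z₁ ^ p.1 * z₂ ^ p.2 := by
  set F : ℕ × ℕ → ℝ × ℝ → ℂ := fun p θ =>
    (exp (I * θ.1) * z₁) ^ p.1 * (exp (I * θ.2) * z₂) ^ p.2
  have hF_norm (p : ℕ × ℕ) (θ : ℝ × ℝ) : ‖F p θ‖ = ‖z₁‖ ^ p.1 * ‖z₂‖ ^ p.2 := by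
    simp only [F, norm_mul, norm_pow, norm_exp_I_mul_ofReal, one_mul]
  have hF_int (p : ℕ × ℕ) : Integrable (F p) μ :=
    (integrable_const (‖z₁‖ ^ p.1 * ‖z₂‖ ^ p.2)).mono' (by fun_prop)
      (.of_forall fun θ => (hF_norm p θ).le)
  have hF_sum : Summable fun p => ∫ θ, ‖F p θ‖ ∂μ := by
    simp_rw [hF_norm, integral_const, smul_eq_mul]
    have hgeom {z : ℂ} (hz : ‖z‖ < 1) : Summable fun n : ℕ => ‖‖z‖ ^ n‖ := by
      simpa using summable_geometric_of_lt_one (norm_nonneg z) hz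
    exact (summable_mul_of_summable_norm (hgeom h₁) (hgeom h₂)).mul_left _
  calc cauchy μ z₁ z₂ = ∫ θ, ∑' p, F p θ ∂μ := by
        unfold cauchy
        congr 1 with θ
        exact inv_one_sub_mul_inv_one_sub_eq_tsum (by rwa [norm_exp_I_mul_ofReal_mul])
          (by rwa [norm_exp_I_mul_ofReal_mul])
    _ = ∑' p, ∫ θ, F p θ ∂μ := (integral_tsum_of_summable_integral_norm hF_int hF_sum).symm
    _ = _ := tsum_congr fun p => integral_exp_mul_pow_mul_exp_mul_pow μ z₁ z₂ p.1 p.2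

lemma muhat_neg_neg (μ : Measure (ℝ × ℝ)) (k l : ℤ) :
    muhat μ (-k) (-l) = starRingEnd ℂ (muhat μ k l) := by
  rw [muhat, muhat, ← integral_conj]
  congr 1 with θ
  rw [← exp_conj]
  simp only [map_mul, map_add, map_neg, conj_I, conj_ofReal, map_intCast]
  push_cast
  ring_nf

lemma nnnorm_muhat_neg_neg (μ : Measure (ℝ × ℝ)) (k l : ℤ) :
    ‖muhat μ (-k) (-l)‖₊ = ‖muhat μ k l‖₊ := by
  rw [muhat_neg_neg, RCLike.nnnorm_conj]

lemma muhat_zero_zero (μ : Measure (ℝ × ℝ)) [IsProbabilityMeasure μ] : muhat μ 0 0 = 1 := by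
  simp [muhat]

theorem ENNReal.tsum_nat_prod_eq_zero_add (f : ℕ × ℕ → ℝ≥0∞) :
    ∑' p, f p = f (0, 0) + ∑' l, f (0, l + 1) + ∑' k, f (k + 1, 0) +
      ∑' p : ℕ × ℕ, f (p.1 + 1, p.2 + 1) := by
  rw [ENNReal.tsum_prod', tsum_eq_zero_add' ENNReal.summable,
    tsum_eq_zero_add' ENNReal.summable]
  simp_rw [tsum_eq_zero_add' (f := fun l => f (_ + 1, l)) ENNReal.summable]
  rw [ENNReal.tsum_add, ← ENNReal.tsum_prod (f := fun k l => f (k + 1, l + 1))]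
  ring

lemma bergNorm_eq_tsum (μ : Measure (ℝ × ℝ)) :
    bergNorm μ = ∑' p : ℕ × ℕ, (‖muhat μ p.1 p.2‖₊ : ℝ≥0∞) ^ 2 /
      (((p.1 : ℝ≥0∞) + 1) * ((p.2 : ℝ≥0∞) + 1)) := by
  simp only [bergNorm, nnnorm_muhat_neg_neg]

theorem bergNorm_le_two_mul_energy (μ : Measure (ℝ × ℝ)) [IsProbabilityMeasure μ] :
    bergNorm μ ≤ 2 * energy μ := by
  set A := ∑' k : ℕ, ((‖muhat μ ((k : ℤ) + 1) 0‖₊ : ℝ≥0∞)) ^ 2 / ((k : ℝ≥0∞) + 1)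
  set B := ∑' l : ℕ, ((‖muhat μ 0 ((l : ℤ) + 1)‖₊ : ℝ≥0∞)) ^ 2 / ((l : ℝ≥0∞) + 1)
  set D := ∑' q : {k : ℤ // k ≠ 0} × ℕ, ((‖muhat μ q.1.1 ((q.2 : ℤ) + 1)‖₊ : ℝ≥0∞)) ^ 2 /
    ((q.1.1.natAbs : ℝ≥0∞) * ((q.2 : ℝ≥0∞) + 1))
  have hD : ∑' p : ℕ × ℕ, ((‖muhat μ ((p.1 : ℤ) + 1) ((p.2 : ℤ) + 1)‖₊ : ℝ≥0∞)) ^ 2 /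
      (((p.1 : ℝ≥0∞) + 1 + 1) * ((p.2 : ℝ≥0∞) + 1 + 1)) ≤ D := by
    let e : ℕ × ℕ → {k : ℤ // k ≠ 0} × ℕ := fun p => (⟨(p.1 : ℤ) + 1, by omega⟩, p.2)
    have he : Function.Injective e := fun p q h => by
      simp only [e, Prod.mk.injEq, Subtype.mk.injEq] at h
      exact Prod.ext (by omega) h.2
    refine le_trans (ENNReal.tsum_le_tsum fun p => ?_) (ENNReal.tsum_comp_le_tsum_of_injective he _)
    simp only [e]
    have hk : (((p.1 : ℤ) + 1).natAbs : ℝ≥0∞) = p.1 + 1 := by norm_cast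
    rw [hk]
    gcongr <;> exact le_self_add
  calc bergNorm μ ≤ 1 + B + A + D := by
        rw [bergNorm_eq_tsum, ENNReal.tsum_nat_prod_eq_zero_add]
        push_cast
        simp only [zero_add, one_mul, mul_one, muhat_zero_zero]
        gcongr ?_ + ?_ + ?_ + ?_
        · simp
        all_goals exact ENNReal.tsum_le_tsum fun k => ENNReal.div_le_div_left le_self_add _
    _ ≤ 2 * (1 + A + B) + 2 * (1 / 2 * D) := by
        rw [← mul_assoc, ENNReal.mul_div_cancel two_ne_zero ENNReal.ofNat_ne_top, one_mul,
          add_right_comm 1 B A]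
        gcongr
        exact le_mul_of_one_le_left' one_le_two
    _ = 2 * energy μ := by rw [← mul_add]; rfl

/-- the Cauchy transform of a probability measure of finite logarithmic
energy lies in the Bergman space of the bidisk, with squared norm
Σ |μ̂(k,l)|²/((k+1)(l+1)) bounded by a constant times the energy. -/
theorem stmt15 :
    ∃ C : ℝ≥0∞, 0 < C ∧ C ≠ ⊤ ∧
      ∀ μ : MeasureTheory.Measure (ℝ × ℝ), MeasureTheory.IsProbabilityMeasure μ →
        energy μ ≠ ⊤ →
          (∀ z1 z2 : ℂ, ‖z1‖ < 1 → ‖z2‖ < 1 →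
            cauchy μ z1 z2 =
              ∑' p : ℕ × ℕ, muhat μ (-(p.1 : ℤ)) (-(p.2 : ℤ)) * z1 ^ p.1 * z2 ^ p.2) ∧
          bergNorm μ ≤ C * energy μ ∧ bergNorm μ ≠ ⊤ := by
  refine ⟨2, two_pos, ENNReal.ofNat_ne_top, fun μ _ hE => ⟨fun z1 z2 => cauchy_eq_tsum μ, ?_, ?_⟩⟩
  · exact bergNorm_le_two_mul_energy μ
  · exact ne_top_of_le_ne_top (ENNReal.mul_ne_top ENNReal.ofNat_ne_top hE)
      (bergNorm_le_two_mul_energy μ)
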